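/- arXiv:2402.09971 — 2 statements merged into one kernel-verified Lean document; each statement's English description precedes it below -/
import Mathlib

section
/- Let G be a finite simple graph with positive integer vertex weights w, let S ⊆ V(G), and let z ∈ S be such that at most one connected component of G − S contains a neighbor of z. Then w(S ∖ {z}) + max_{D ∈ cc(G − (S ∖ {z}))} w(D) ≤ w(S) + max_{D ∈ cc(G − S)} w(D). -/
open SimpleGraph

variable {V : Type*}

/-- The vertex sets of the connected components of `G − S`
(the subgraph of `G` induced on the complement of `S`). -/
def ccSets (G : SimpleGraph V) (S : Set V) : Set (Set V) :=
  {D | ∃ c : (G.induce Sᶜ).ConnectedComponent, D = Subtype.val '' c.supp}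

/-- The total weight of a set of vertices. -/
noncomputable def wsum (w : V → ℕ) (A : Set V) : ℕ := ∑ᶠ v ∈ A, w v

/-- The weight of a heaviest connected component of `G − S` (`0` if there is none). -/
noncomputable def maxCC (G : SimpleGraph V) (w : V → ℕ) (S : Set V) : ℕ :=
  sSup (wsum w '' ccSets G S)

/-
Every component of `G − (S ∖ {z})` is, apart from `z`, contained in a component of `G − S`:
a path of `G − (S ∖ {z})` that passes through `z` only joins components of `G − S` that
contain neighbours of `z`, and there is at most one such component. Hence putting `z` back
into the graph raises the heaviest component by at most `w z`, which is exactly what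
removing `z` from `S` saves.
-/

section Weights

variable [Finite V] (w : V → ℕ)

lemma wsum_mono {A B : Set V} (h : A ⊆ B) : wsum w A ≤ wsum w B := by
  rw [wsum, wsum, ← finsum_mem_add_sdiff h (Set.toFinite B)]
  exact Nat.le_add_right _ _

lemma wsum_eq_add_wsum_diff_singleton {A : Set V} {z : V} (hz : z ∈ A) :
    wsum w A = w z + wsum w (A \ {z}) := by
  rw [wsum, wsum, ← finsum_mem_add_sdiff (Set.singleton_subset_iff.mpr hz) (Set.toFinite A),
    finsum_mem_singleton]

lemma wsum_le_add_wsum_diff_singleton (A : Set V) (z : V) :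
    wsum w A ≤ w z + wsum w (A \ {z}) :=
  calc wsum w A ≤ wsum w (insert z A) := wsum_mono w (Set.subset_insert z A)
    _ = w z + wsum w (A \ {z}) := by
      rw [wsum_eq_add_wsum_diff_singleton w (Set.mem_insert z A),
        Set.insert_sdiff_of_mem A (Set.mem_singleton z)]

lemma wsum_le_maxCC (G : SimpleGraph V) {S D : Set V} (hD : D ∈ ccSets G S) :
    wsum w D ≤ maxCC G w S :=
  le_csSup (Set.toFinite _).bddAbove ⟨D, hD, rfl⟩

end Weights

namespace SimpleGraph

variable {G : SimpleGraph V} {s t : Set V} {z : V}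

lemma Walk.reachable_induce_or_reachable_induce_from_adj (hts : t ⊆ insert z s) :
    ∀ {a b : t}, (G.induce t).Walk a b → ∀ hb : (b : V) ∈ s,
      (∃ ha : (a : V) ∈ s, (G.induce s).Reachable ⟨a, ha⟩ ⟨b, hb⟩) ∨
        ∃ u, ∃ hu : u ∈ s, G.Adj z u ∧ (G.induce s).Reachable ⟨u, hu⟩ ⟨b, hb⟩
  | _, _, .nil, hb => .inl ⟨hb, .rfl⟩
  | a, _, .cons (v := x) hax p, hb => by
    rcases reachable_induce_or_reachable_induce_from_adj hts p hb with ⟨hx, hxb⟩ | hfrom_adj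
    · rcases hts a.2 with haz | ha
      · exact .inr ⟨x, hx, haz ▸ hax, hxb⟩
      · exact .inl ⟨ha, (show (G.induce s).Adj ⟨a, ha⟩ ⟨x, hx⟩ from hax).reachable.trans hxb⟩
    · exact .inr hfrom_adj

lemma Reachable.of_induce_of_subset_insert (hts : t ⊆ insert z s)
    (hadj : ∀ u v (hu : u ∈ s) (hv : v ∈ s), G.Adj z u → G.Adj z v →
      (G.induce s).Reachable ⟨u, hu⟩ ⟨v, hv⟩)
    {a b : t} (ha : (a : V) ∈ s) (hb : (b : V) ∈ s) (h : (G.induce t).Reachable a b) :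
    (G.induce s).Reachable ⟨a, ha⟩ ⟨b, hb⟩ := by
  obtain ⟨p⟩ := h
  rcases Walk.reachable_induce_or_reachable_induce_from_adj hts p hb with ⟨_, hab⟩ | hb_adj
  · exact hab
  rcases Walk.reachable_induce_or_reachable_induce_from_adj hts p.reverse ha with
    ⟨_, hba⟩ | ⟨u, hu, hzu, hua⟩
  · exact hba.symm
  obtain ⟨v, hv, hzv, hvb⟩ := hb_adj
  exact hua.symm.trans ((hadj u v hu hv hzu hzv).trans hvb)

end SimpleGraph

section Components

variable {G : SimpleGraph V} {S : Set V} {z : V}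

lemma reachable_of_adj_of_subsingleton
    (hred : {D ∈ ccSets G S | ∃ u ∈ D, G.Adj z u}.Subsingleton)
    (u v : V) (hu : u ∈ Sᶜ) (hv : v ∈ Sᶜ) (hzu : G.Adj z u) (hzv : G.Adj z v) :
    (G.induce Sᶜ).Reachable ⟨u, hu⟩ ⟨v, hv⟩ := by
  have hmem : ∀ x (hx : x ∈ Sᶜ), G.Adj z x → Subtype.val '' ((G.induce Sᶜ).connectedComponentMk
      ⟨x, hx⟩).supp ∈ {D ∈ ccSets G S | ∃ u ∈ D, G.Adj z u} :=
    fun x hx hzx => ⟨⟨_, rfl⟩, x, ⟨⟨x, hx⟩, rfl, rfl⟩, hzx⟩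
  have hv_mem : (⟨v, hv⟩ : (Sᶜ : Set V)) ∈ ((G.induce Sᶜ).connectedComponentMk ⟨u, hu⟩).supp := by
    rw [← Subtype.val_injective.mem_set_image, hred (hmem u hu hzu) (hmem v hv hzv)]
    exact ⟨⟨v, hv⟩, rfl, rfl⟩
  exact (ConnectedComponent.exact hv_mem).symm

lemma exists_ccSets_superset_diff_singleton
    (hadj : ∀ u v (hu : u ∈ Sᶜ) (hv : v ∈ Sᶜ), G.Adj z u → G.Adj z v →
      (G.induce Sᶜ).Reachable ⟨u, hu⟩ ⟨v, hv⟩)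
    {D : Set V} (hD : D ∈ ccSets G (S \ {z})) (hne : (D \ {z}).Nonempty) :
    ∃ D₀ ∈ ccSets G S, D \ {z} ⊆ D₀ := by
  have hts : (S \ {z})ᶜ ⊆ insert z Sᶜ := fun v hv =>
    or_iff_not_imp_left.mpr fun hvz hvS => hv ⟨hvS, hvz⟩
  have hcompl : ∀ x ∈ (S \ {z})ᶜ, x ≠ z → x ∈ Sᶜ := fun x hx hxz => (hts hx).resolve_left hxz
  obtain ⟨c, rfl⟩ := hD
  obtain ⟨_, ⟨v, hvc, rfl⟩, hvz⟩ := hne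
  have hvS := hcompl v v.2 hvz
  refine ⟨_, ⟨(G.induce Sᶜ).connectedComponentMk ⟨v, hvS⟩, rfl⟩, ?_⟩
  rintro _ ⟨⟨y, hyc, rfl⟩, hyz⟩
  have hyS := hcompl y y.2 hyz
  refine ⟨⟨y, hyS⟩, ?_, rfl⟩
  exact ConnectedComponent.sound <| Reachable.of_induce_of_subset_insert hts hadj hyS hvS <|
    ConnectedComponent.exact (hyc.trans hvc.symm)

lemma maxCC_diff_singleton_le [Finite V] (w : V → ℕ)
    (hadj : ∀ u v (hu : u ∈ Sᶜ) (hv : v ∈ Sᶜ), G.Adj z u → G.Adj z v →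
      (G.induce Sᶜ).Reachable ⟨u, hu⟩ ⟨v, hv⟩) :
    maxCC G w (S \ {z}) ≤ w z + maxCC G w S := by
  refine csSup_le' ?_
  rintro _ ⟨D, hD, rfl⟩
  calc wsum w D ≤ w z + wsum w (D \ {z}) := wsum_le_add_wsum_diff_singleton w D z
    _ ≤ w z + maxCC G w S := by
      gcongr
      rcases (D \ {z}).eq_empty_or_nonempty with hempty | hne
      · simp [hempty, wsum]
      · obtain ⟨D₀, hD₀, hsub⟩ := exists_ccSets_superset_diff_singleton hadj hD hne
        exact (wsum_mono w hsub).trans (wsum_le_maxCC w G hD₀)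

end Components

theorem remove_redundant_vertex_general [Fintype V] (G : SimpleGraph V) (w : V → ℕ)
    (S : Set V) (z : V) (hz : z ∈ S)
    (hred : {D ∈ ccSets G S | ∃ u ∈ D, G.Adj z u}.Subsingleton) :
    wsum w (S \ {z}) + maxCC G w (S \ {z}) ≤ wsum w S + maxCC G w S := by
  have hmax := maxCC_diff_singleton_le w (reachable_of_adj_of_subsingleton hred)
  rw [wsum_eq_add_wsum_diff_singleton w hz]
  omega

/-- Removing a redundant vertex `z` (one such that at most one connected component of
`G − S` contains a neighbor of `z`) from the separator does not worsen the solution. -/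
theorem remove_redundant_vertex [Fintype V] (G : SimpleGraph V) (w : V → ℕ)
    (hw : ∀ v, 0 < w v) (S : Set V) (z : V) (hz : z ∈ S)
    (hred : {D ∈ ccSets G S | ∃ u ∈ D, G.Adj z u}.Subsingleton) :
    wsum w (S \ {z}) + maxCC G w (S \ {z}) ≤ wsum w S + maxCC G w S :=
  remove_redundant_vertex_general G w S z hz hred
end

section
/- Let G be a finite connected simple graph with at least two vertices, and let Y be the set of vertices of G of degree at most 2. Suppose that every vertex of Y has at least one neighbor of degree at least 3, and that every vertex of Y of degree exactly 2 has its two neighbors adjacent to each other. Then |Y| ≤ ml(G); in particular, G has a spanning tree in which every vertex of Y is a leaf. -/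
open SimpleGraph

variable {V : Type*}

/-- The number of leaves (degree-1 vertices) of a graph. -/
noncomputable def numLeaves (T : SimpleGraph V) : ℕ :=
  {v | (T.neighborSet v).ncard = 1}.ncard

/-- The max-leaf number of `G`: the maximum number of leaves over all spanning trees of `G`
(a spanning tree is a subgraph of `G` on the full vertex set that is a tree). -/
noncomputable def ml (G : SimpleGraph V) : ℕ :=
  sSup {n | ∃ T : SimpleGraph V, T ≤ G ∧ T.IsTree ∧ n = numLeaves T}

/-!
Let `S` be the set of vertices of degree at least 3. The vertices outside `S` have pairwise
adjacent neighbours, so every walk between two vertices of `S` can be shortcut around them and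
`G[S]` is connected. Fix for every `y ∉ S` a neighbour `f y ∈ S` and delete all other edges at
`y`: the resulting spanning subgraph is still connected, and in any of its spanning trees each
`y ∉ S` has `f y` as its only neighbour, i.e. is a leaf.
-/

namespace SimpleGraph

variable {G : SimpleGraph V} {S : Set V}

/-- Invariant of the shortcut argument: `u` is the last vertex of `S` visited, and it is
either the current vertex or adjacent to it. -/
theorem Walk.reachable_induce_of_isClique_neighborSet
    (hS : ∀ x ∉ S, G.IsClique (G.neighborSet x)) {x v : V} (p : G.Walk x v) (hv : v ∈ S)
    {u : V} (hu : u ∈ S) (hux : u = x ∨ G.Adj u x) :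
    (G.induce S).Reachable ⟨u, hu⟩ ⟨v, hv⟩ := by
  induction p generalizing u with
  | nil =>
    rcases hux with rfl | hadj
    · rfl
    · exact Adj.reachable (by simpa using hadj)
  | @cons x z v hxz q ih =>
    by_cases hx : x ∈ S
    · have hux' : (G.induce S).Reachable ⟨u, hu⟩ ⟨x, hx⟩ := by
        rcases hux with rfl | hadj
        · rfl
        · exact Adj.reachable (by simpa using hadj)
      exact hux'.trans (ih hv hx (Or.inr hxz))
    · have hadj : G.Adj u x := hux.resolve_left (by rintro rfl; exact hx hu)
      by_cases hzu : z = u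
      · exact ih hv hu (Or.inl hzu.symm)
      · exact ih hv hu (Or.inr (hS x hx hadj.symm hxz (Ne.symm hzu)))

theorem Connected.induce_of_isClique_neighborSet (hG : G.Connected) (hSne : S.Nonempty)
    (hS : ∀ x ∉ S, G.IsClique (G.neighborSet x)) : (G.induce S).Connected := by
  have := hSne.to_subtype
  refine ⟨fun a b => ?_⟩
  obtain ⟨p⟩ := hG.preconnected a b
  exact p.reachable_induce_of_isClique_neighborSet hS b.2 a.2 (Or.inl rfl)

def pendantRestrict (G : SimpleGraph V) (P : Set V) (f : V → V) : SimpleGraph V where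
  Adj a b := G.Adj a b ∧ (a ∈ P → b = f a) ∧ (b ∈ P → a = f b)
  symm := ⟨fun _ _ h => ⟨h.1.symm, h.2.2, h.2.1⟩⟩
  loopless := ⟨fun a h => G.loopless.irrefl a h.1⟩

variable {P : Set V} {f : V → V}

@[simp]
theorem pendantRestrict_adj {a b : V} :
    (G.pendantRestrict P f).Adj a b ↔ G.Adj a b ∧ (a ∈ P → b = f a) ∧ (b ∈ P → a = f b) :=
  Iff.rfl

theorem pendantRestrict_le : G.pendantRestrict P f ≤ G :=
  fun _ _ h => (pendantRestrict_adj.1 h).1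

theorem neighborSet_pendantRestrict_subset {y : V} (hy : y ∈ P) :
    (G.pendantRestrict P f).neighborSet y ⊆ {f y} := fun _ h => (pendantRestrict_adj.1 h).2.1 hy

theorem connected_pendantRestrict (hG : (G.induce Pᶜ).Connected)
    (hf : ∀ y ∈ P, G.Adj y (f y) ∧ f y ∉ P) : (G.pendantRestrict P f).Connected := by
  let φ : G.induce Pᶜ →g G.pendantRestrict P f :=
    ⟨Subtype.val, fun {a b} h =>
      pendantRestrict_adj.2 ⟨by simpa using h, fun ha => absurd ha a.2, fun hb => absurd hb b.2⟩⟩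
  have hreach : ∀ v, ∃ s : ↥Pᶜ, (G.pendantRestrict P f).Reachable s v := by
    intro v
    by_cases hv : v ∈ P
    · refine ⟨⟨f v, (hf v hv).2⟩, Adj.reachable ?_⟩
      exact pendantRestrict_adj.2
        ⟨(hf v hv).1.symm, fun h => absurd h (hf v hv).2, fun _ => rfl⟩
    · exact ⟨⟨v, hv⟩, .rfl⟩
  obtain ⟨s₀⟩ := hG.nonempty
  refine (connected_iff_exists_forall_reachable _).2 ⟨s₀, fun v => ?_⟩
  obtain ⟨s, hs⟩ := hreach v
  exact ((hG.preconnected s₀ s).map φ).trans hs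

theorem Connected.ncard_neighborSet_eq_one {T : SimpleGraph V} (hT : T.Connected) {y z : V}
    (hyz : y ≠ z) (hsub : T.neighborSet y ⊆ {z}) : (T.neighborSet y).ncard = 1 := by
  rw [((hT.preconnected y z).nonempty_neighborSet_left hyz).subset_singleton_iff.1 hsub,
    Set.ncard_singleton]

end SimpleGraph

theorem numLeaves_le_ml [Finite V] {G T : SimpleGraph V} (hTG : T ≤ G) (hT : T.IsTree) :
    numLeaves T ≤ ml G := by
  refine le_csSup ⟨Nat.card V, ?_⟩ ⟨T, hTG, hT, rfl⟩
  rintro n ⟨T', -, -, rfl⟩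
  exact (Set.ncard_le_ncard (Set.subset_univ _)).trans (Set.ncard_univ V).le

theorem card_lowDegree_le_ml_general [Fintype V] (G : SimpleGraph V) (hG : G.Connected)
    (Y : Set V)
    (hY : Y = {v | (G.neighborSet v).ncard ≤ 2})
    (hnbr : ∀ y ∈ Y, ∃ u ∈ G.neighborSet y, 3 ≤ (G.neighborSet u).ncard)
    (htri : ∀ y ∈ Y, (G.neighborSet y).ncard = 2 →
      ∀ u ∈ G.neighborSet y, ∀ v ∈ G.neighborSet y, u ≠ v → G.Adj u v) :
    Y.ncard ≤ ml G ∧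
      ∃ T : SimpleGraph V, T ≤ G ∧ T.IsTree ∧ ∀ y ∈ Y, (T.neighborSet y).ncard = 1 := by
  choose! f hfadj hfdeg using hnbr
  have hf : ∀ y ∈ Y, G.Adj y (f y) ∧ f y ∉ Y := fun y hy =>
    ⟨hfadj y hy, by subst hY; simpa using (hfdeg y hy).trans_lt' (by norm_num)⟩
  have hclique : ∀ x ∉ Yᶜ, G.IsClique (G.neighborSet x) := by
    intro x hx u hu v hv huv
    rw [Set.notMem_compl_iff] at hx
    have hdeg : (G.neighborSet x).ncard ≤ 2 := by subst hY; exact hx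
    refine htri x hx (le_antisymm hdeg ?_) u hu v hv huv
    simpa [Set.ncard_pair huv] using Set.ncard_le_ncard (Set.pair_subset hu hv)
  have hYc : Yᶜ.Nonempty := by
    obtain ⟨v⟩ := hG.nonempty
    by_cases hv : v ∈ Y
    · exact ⟨f v, (hf v hv).2⟩
    · exact ⟨v, hv⟩
  obtain ⟨T, hTle, hT⟩ := (connected_pendantRestrict
    (hG.induce_of_isClique_neighborSet hYc hclique) hf).exists_isTree_le
  have hleaf : ∀ y ∈ Y, (T.neighborSet y).ncard = 1 := fun y hy =>
    hT.connected.ncard_neighborSet_eq_one (hf y hy).1.ne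
      ((neighborSet_mono hTle y).trans (neighborSet_pendantRestrict_subset hy))
  have hTG : T ≤ G := hTle.trans pendantRestrict_le
  exact ⟨(Set.ncard_le_ncard hleaf).trans (numLeaves_le_ml hTG hT), T, hTG, hT, hleaf⟩

/-- Let `Y` be the set of vertices of degree at most 2 of a finite connected graph `G` with
at least two vertices. If every vertex of `Y` has a neighbor of degree at least 3, and every
vertex of `Y` of degree exactly 2 has its two neighbors adjacent to each other, then
`|Y| ≤ ml(G)`; in particular, `G` has a spanning tree in which every vertex of `Y` is a leaf. -/
theorem card_lowDegree_le_ml [Fintype V] (G : SimpleGraph V) (hG : G.Connected)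
    (hcard : 1 < Fintype.card V) (Y : Set V)
    (hY : Y = {v | (G.neighborSet v).ncard ≤ 2})
    (hnbr : ∀ y ∈ Y, ∃ u ∈ G.neighborSet y, 3 ≤ (G.neighborSet u).ncard)
    (htri : ∀ y ∈ Y, (G.neighborSet y).ncard = 2 →
      ∀ u ∈ G.neighborSet y, ∀ v ∈ G.neighborSet y, u ≠ v → G.Adj u v) :
    Y.ncard ≤ ml G ∧
      ∃ T : SimpleGraph V, T ≤ G ∧ T.IsTree ∧ ∀ y ∈ Y, (T.neighborSet y).ncard = 1 :=
  card_lowDegree_le_ml_general G hG Y hY hnbr htri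
end
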